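/- arXiv:2311.02968 — 2 statements merged into one kernel-verified Lean document; each statement's English description precedes it below -/
import Mathlib

section
/- For all integers k and i with 0 < i < k+1, the identity a_{k+i}(t) + a_{k−i}(t) = (a_i(t) − a_{i−1}(t))·a_k(t) holds, where a is the polynomial sequence defined by a₀(t)=1, a₁(t)=t−1, a_k(t)=(t−2)a_{k−1}(t) − a_{k−2}(t). -/
open Polynomial

noncomputable def aSeq : ℕ → Polynomial ℝ
  | 0 => 1
  | 1 => X - 1
  | (k + 2) => (X - 2) * aSeq (k + 1) - aSeq k

noncomputable def bSeq : ℕ → Polynomial ℝ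
  | 0 => 2
  | 1 => X - 2
  | (k + 2) => (X - 2) * bSeq (k + 1) - bSeq k

lemma bSeq_eq (i : ℕ) : bSeq (i + 1) = aSeq (i + 1) - aSeq i := by
  induction i using Nat.twoStepInduction with
  | zero => show (X - 2 : Polynomial ℝ) = (X - 1) - 1; ring
  | one =>
    show (X - 2) * (X - 2) - 2 = ((X - 2) * (X - 1) - 1) - (X - 1)
    ring
  | more n ih1 ih2 =>
    show (X - 2) * bSeq (n + 2) - bSeq (n + 1) = _
    rw [ih1, ih2]
    show _ = ((X - 2) * aSeq (n + 2) - aSeq (n + 1)) - aSeq (n + 2)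
    have hrec : aSeq (n + 2) = (X - 2) * aSeq (n + 1) - aSeq n := rfl
    linear_combination hrec

lemma key (i : ℕ) : ∀ j, aSeq (i + j + i) + aSeq j = bSeq i * aSeq (i + j) := by
  induction i using Nat.twoStepInduction with
  | zero => intro j; simp [bSeq]; ring
  | one =>
    intro j
    have h : 1 + j + 1 = j + 2 := by ring
    have h2 : 1 + j = j + 1 := by ring
    rw [h, h2]
    show ((X - 2) * aSeq (j + 1) - aSeq j) + aSeq j = (X - 2) * aSeq (j + 1)
    ring
  | more n ih1 ih2 =>
    intro j
    have e1 : (n + 2) + j + (n + 2) = (n + n + j + 2) + 2 := by ring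
    have e2 : (n + 2) + j = (n + j) + 2 := by ring
    rw [e1, e2]
    show ((X - 2) * aSeq (n + n + j + 3) - aSeq (n + n + j + 2)) + aSeq j
        = ((X - 2) * bSeq (n + 1) - bSeq n) * aSeq (n + j + 2)
    have hA := ih2 (j + 1)
    have hB := ih1 (j + 2)
    have eA : (n + 1) + (j + 1) + (n + 1) = n + n + j + 3 := by ring
    have eB : (n + 1) + (j + 1) = n + j + 2 := by ring
    have eC : n + (j + 2) + n = n + n + j + 2 := by ring
    have eD : n + (j + 2) = n + j + 2 := by ring
    rw [eA, eB] at hA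
    rw [eC, eD] at hB
    have hrec : aSeq (j + 2) = (X - 2) * aSeq (j + 1) - aSeq j := rfl
    linear_combination (X - 2) * hA - hB + hrec

theorem aSeq_add_identity (k i : ℕ) (h1 : 0 < i) (h2 : i < k + 1) :
    aSeq (k + i) + aSeq (k - i) = (aSeq i - aSeq (i - 1)) * aSeq k := by
  obtain ⟨m, rfl⟩ : ∃ m, i = m + 1 := ⟨i - 1, by omega⟩
  obtain ⟨j, rfl⟩ : ∃ j, k = (m + 1) + j := ⟨k - (m + 1), by omega⟩
  have h := key (m + 1) j
  have e1 : (m + 1) + j + (m + 1) = ((m + 1) + j) + (m + 1) := by ring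
  have e2 : ((m + 1) + j) - (m + 1) = j := by omega
  have e3 : (m + 1) - 1 = m := by omega
  rw [e1] at h
  rw [e2, e3, ← bSeq_eq, h]
end

section
/- For every k ≥ 0, the identity a₀(t) + a₁(t) + ⋯ + a_{2k}(t) = a_k(t)² holds, i.e., f_{2k+1}(t) = a_k(t)², where f_s(t) = Σ_{i=0}^{s−1} a_i(t). -/
open Polynomial Finset

noncomputable def fSeq (s : ℕ) : Polynomial ℝ := ∑ i ∈ range s, aSeq i

noncomputable def uSeq : ℕ → Polynomial ℝ
  | 0 => 0
  | 1 => 1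
  | (k + 2) => (X - 2) * uSeq (k + 1) - uSeq k

lemma a_eq_u (n : ℕ) : aSeq n = uSeq (n + 1) + uSeq n := by
  induction n using Nat.twoStepInduction with
  | zero => simp [aSeq, uSeq]
  | one => simp [aSeq, uSeq]; ring
  | more n ih1 ih2 =>
    have h1 : uSeq (n + 2 + 1) = (X - 2) * uSeq (n + 2) - uSeq (n + 1) := rfl
    have h2 : uSeq (n + 2) = (X - 2) * uSeq (n + 1) - uSeq n := rfl
    rw [aSeq, ih1, ih2, h1, h2]
    ring

lemma a_add (n m : ℕ) : aSeq (m + n + 1) =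
    aSeq (m + 1) * uSeq (n + 1) - aSeq m * uSeq n := by
  induction n using Nat.twoStepInduction generalizing m with
  | zero => simp [uSeq]
  | one =>
    show aSeq (m + 2) = _
    have h2 : uSeq 2 = (X - 2) * uSeq 1 - uSeq 0 := rfl
    have h1 : uSeq 1 = (1 : Polynomial ℝ) := rfl
    have h0 : uSeq 0 = (0 : Polynomial ℝ) := rfl
    rw [aSeq, h2, h1, h0]
    ring
  | more n ih1 ih2 =>
    have e1 : m + (n + 2) + 1 = (m + n + 1) + 2 := by ring
    have h1 : uSeq (n + 2 + 1) = (X - 2) * uSeq (n + 2) - uSeq (n + 1) := rfl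
    have h2 : uSeq (n + 2) = (X - 2) * uSeq (n + 1) - uSeq n := rfl
    rw [e1, aSeq, show m + n + 1 + 1 = m + (n+1) + 1 from by ring,
      ih2 m, ih1 m, h1, h2]
    ring

lemma key_s3 (k : ℕ) : aSeq (2 * k + 1) + aSeq (2 * k + 2) =
    aSeq (k + 1) ^ 2 - aSeq k ^ 2 := by
  have h1 := a_add k k
  have h2 := a_add (k + 1) k
  rw [show k + k + 1 = 2 * k + 1 from by ring] at h1
  rw [show k + (k + 1) + 1 = 2 * k + 2 from by ring] at h2
  rw [h1, h2, a_eq_u (k + 1), a_eq_u k]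
  ring

theorem f_odd_eq_sq (k : ℕ) : fSeq (2 * k + 1) = (aSeq k) ^ 2 := by
  induction k with
  | zero => simp [fSeq, aSeq]
  | succ k ih =>
    have : 2 * (k + 1) + 1 = (2 * k + 1) + 1 + 1 := by ring
    rw [this]
    unfold fSeq
    rw [sum_range_succ, sum_range_succ, ← fSeq, ih,
      show 2 * k + 1 + 1 = 2 * k + 2 from rfl]
    have := key_s3 k
    linear_combination this
end
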